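/- Let σ > 0, B > 0, β ≥ 0, and let x_1, …, x_n ∈ ℝ^d and x'_1, …, x'_n ∈ ℝ^d satisfy ‖x_i‖_2 ≤ B and ‖x'_i‖_2 ≤ B for all i, x'_i = x_i for all i ≤ n−1, and ‖x_n − x'_n‖_2 ≤ β. Let H^cts and H^cts' be the continuous quadratic NTK matrices of (x_i) and (x'_i), respectively, i.e., H^cts_{ij} = E_{w ~ N(0, σ²I_d)}[⟨w, x_i⟩⟨w, x_j⟩⟨x_i, x_j⟩] and similarly for H^cts' with the primed data. Then ‖H^cts − H^cts'‖_F ≤ σ²B³β · √(8n + 8). -/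

import Mathlib

open MeasureTheory ProbabilityTheory

/-- Euclidean inner product on `Fin d → ℝ`. -/
def ip {d : ℕ} (u v : Fin d → ℝ) : ℝ := ∑ s, u s * v s

/-- Euclidean norm on `Fin d → ℝ`. -/
noncomputable def l2 {d : ℕ} (u : Fin d → ℝ) : ℝ := Real.sqrt (∑ s, u s ^ 2)

/-- The Gaussian measure `N(0, σ² I_d)` on `Fin d → ℝ`: the `d`-fold product of `N(0, σ²)`. -/
noncomputable def gaussPi (d : ℕ) (σ : ℝ) : Measure (Fin d → ℝ) :=
  Measure.pi fun _ => gaussianReal 0 (σ ^ 2).toNNReal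

/-- Continuous quadratic NTK matrix of the data `x`. -/
noncomputable def ntkCts {d n : ℕ} (σ : ℝ) (x : Fin n → Fin d → ℝ) :
    Matrix (Fin n) (Fin n) ℝ := fun i j =>
  ∫ w, ip w (x i) * ip w (x j) * ip (x i) (x j) ∂gaussPi d σ

/-- Frobenius norm of a real matrix. -/
noncomputable def frobNorm {n : ℕ} (A : Matrix (Fin n) (Fin n) ℝ) : ℝ :=
  Real.sqrt (∑ i, ∑ j, A i j ^ 2)

/-!
Since `E[w wᵀ] = σ² I` for `w ~ N(0, σ² I)`, the entries of the NTK matrix are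
`σ² ⟨xᵢ, xⱼ⟩²`. Writing `a² - b² = (a - b)(a + b)` and applying Cauchy–Schwarz bounds the
`(i, j)` entry of the difference by `2 σ² B³ (eᵢ + eⱼ)` with `eᵢ = ‖xᵢ - x'ᵢ‖`. Only the last
`eᵢ =: e` is nonzero, so `∑ᵢⱼ (eᵢ + eⱼ)² = 2 (n + 1) e² + 2 e² ≤ (2 (n + 1) + 2) β²`.
-/

section Moments

variable {ι : Type*} [Fintype ι] {μ : Measure ℝ} [IsProbabilityMeasure μ]

lemma integrable_eval_mul_eval_pi (h2 : MemLp id 2 μ) (s t : ι) :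
    Integrable (fun w : ι → ℝ => w s * w t) (Measure.pi fun _ => μ) :=
  (h2.comp_measurePreserving (measurePreserving_eval _ s)).integrable_mul
    (h2.comp_measurePreserving (measurePreserving_eval _ t))

lemma integral_comp_eval_pi {g : ℝ → ℝ} (hg : AEStronglyMeasurable g μ) (s : ι) :
    ∫ w : ι → ℝ, g (w s) ∂(Measure.pi fun _ => μ) = ∫ x, g x ∂μ := by
  have hs := measurePreserving_eval (fun _ : ι => μ) s
  rw [← hs.map_eq] at hg
  rw [← integral_map hs.measurable.aemeasurable hg, hs.map_eq]

lemma integral_eval_mul_eval_pi [DecidableEq ι] (h0 : ∫ x, x ∂μ = 0) (s t : ι) :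
    ∫ w : ι → ℝ, w s * w t ∂(Measure.pi fun _ => μ) = if s = t then ∫ x, x ^ 2 ∂μ else 0 := by
  split_ifs with hst
  · subst hst
    simp_rw [← sq]
    exact integral_comp_eval_pi (measurable_id.pow_const 2).aestronglyMeasurable s
  · have hindep := (iIndepFun_pi (X := fun _ (x : ℝ) => x) (μ := fun _ => μ)
      (fun _ => aemeasurable_id)).indepFun hst
    rw [hindep.integral_fun_mul_eq_mul_integral
      (measurable_pi_apply s).aestronglyMeasurable (measurable_pi_apply t).aestronglyMeasurable,
      integral_comp_eval_pi (g := fun x => x) aestronglyMeasurable_id s,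
      integral_comp_eval_pi (g := fun x => x) aestronglyMeasurable_id t, h0, mul_zero]

end Moments

lemma integral_ip_mul_ip_pi {d : ℕ} {μ : Measure ℝ} [IsProbabilityMeasure μ] (h2 : MemLp id 2 μ)
    (h0 : ∫ x, x ∂μ = 0) (u u' : Fin d → ℝ) :
    ∫ w, ip w u * ip w u' ∂(Measure.pi fun _ => μ) = (∫ x, x ^ 2 ∂μ) * ip u u' := by
  have hexpand : ∀ w : Fin d → ℝ, ip w u * ip w u' = ∑ s, ∑ t, u s * u' t * (w s * w t) := by
    intro w
    simp only [ip, Finset.sum_mul_sum]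
    congr! 2 with s _ t _
    ring
  have hint := integrable_eval_mul_eval_pi (ι := Fin d) h2
  simp_rw [hexpand]
  rw [integral_finsetSum _ fun s _ => integrable_finsetSum _ fun t _ => (hint s t).const_mul _]
  simp_rw [integral_finsetSum _ fun t _ => (hint _ t).const_mul _, integral_const_mul,
    integral_eval_mul_eval_pi h0, mul_ite, mul_zero, Finset.sum_ite_eq, Finset.mem_univ, if_true,
    ip, Finset.mul_sum]
  congr! 1 with s
  ring

lemma ntkCts_apply {d n : ℕ} (σ : ℝ) (x : Fin n → Fin d → ℝ) (i j : Fin n) :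
    ntkCts σ x i j = σ ^ 2 * ip (x i) (x j) ^ 2 := by
  have hvar : ∫ x, x ^ 2 ∂gaussianReal 0 (σ ^ 2).toNNReal = σ ^ 2 := by
    have h := variance_of_integral_eq_zero (μ := gaussianReal 0 (σ ^ 2).toNNReal)
      aemeasurable_id integral_id_gaussianReal
    rwa [variance_id_gaussianReal, Real.coe_toNNReal _ (sq_nonneg σ), eq_comm] at h
  rw [ntkCts, gaussPi, integral_mul_const,
    integral_ip_mul_ip_pi (memLp_id_gaussianReal 2) integral_id_gaussianReal, hvar]
  ring

section Gram

variable {d : ℕ}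

lemma l2_nonneg (u : Fin d → ℝ) : 0 ≤ l2 u := Real.sqrt_nonneg _

lemma l2_zero : l2 (0 : Fin d → ℝ) = 0 := by simp [l2]

lemma abs_ip_le (u w : Fin d → ℝ) : |ip u w| ≤ l2 u * l2 w := by
  rw [ip, l2, l2, ← Real.sqrt_mul (Finset.sum_nonneg fun _ _ => sq_nonneg _), ← Real.sqrt_sq_eq_abs]
  exact Real.sqrt_le_sqrt (Finset.sum_mul_sq_le_sq_mul_sq _ u w)

lemma abs_sq_ip_sub_sq_ip_le {B : ℝ} {u u' w w' : Fin d → ℝ} (hu : l2 u ≤ B) (hu' : l2 u' ≤ B)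
    (hw : l2 w ≤ B) (hw' : l2 w' ≤ B) :
    |ip u w ^ 2 - ip u' w' ^ 2| ≤ 2 * B ^ 3 * (l2 (u - u') + l2 (w - w')) := by
  have hB : 0 ≤ B := (l2_nonneg u).trans hu
  have hsub : |ip u w - ip u' w'| ≤ B * (l2 (u - u') + l2 (w - w')) := by
    have hsplit : ip u w - ip u' w' = ip (u - u') w + ip u' (w - w') := by
      simp only [ip, ← dotProduct.eq_1, sub_dotProduct, dotProduct_sub]
      ring
    rw [hsplit]
    calc |ip (u - u') w + ip u' (w - w')|
        ≤ l2 (u - u') * l2 w + l2 u' * l2 (w - w') :=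
          (abs_add_le _ _).trans (add_le_add (abs_ip_le _ _) (abs_ip_le _ _))
      _ ≤ l2 (u - u') * B + B * l2 (w - w') := by
          gcongr
          exacts [l2_nonneg _, l2_nonneg _]
      _ = B * (l2 (u - u') + l2 (w - w')) := by ring
  have hadd : |ip u w + ip u' w'| ≤ 2 * B ^ 2 :=
    calc |ip u w + ip u' w'| ≤ l2 u * l2 w + l2 u' * l2 w' :=
          (abs_add_le _ _).trans (add_le_add (abs_ip_le _ _) (abs_ip_le _ _))
      _ ≤ B * B + B * B := by gcongr <;> exact l2_nonneg _
      _ = 2 * B ^ 2 := by ring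
  calc |ip u w ^ 2 - ip u' w' ^ 2| = |ip u w - ip u' w'| * |ip u w + ip u' w'| := by
        rw [← abs_mul, sq_sub_sq, mul_comm]
    _ ≤ B * (l2 (u - u') + l2 (w - w')) * (2 * B ^ 2) :=
        mul_le_mul hsub hadd (abs_nonneg _) ((abs_nonneg _).trans hsub)
    _ = 2 * B ^ 3 * (l2 (u - u') + l2 (w - w')) := by ring

end Gram

lemma sum_sum_sq_le_of_abs_le {ι : Type*} [Fintype ι] {A : ι → ι → ℝ} {c : ℝ} {e : ι → ℝ}
    (h : ∀ i j, |A i j| ≤ c * (e i + e j)) :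
    ∑ i, ∑ j, A i j ^ 2 ≤ c ^ 2 * (2 * Fintype.card ι * ∑ i, e i ^ 2 + 2 * (∑ i, e i) ^ 2) := by
  calc ∑ i, ∑ j, A i j ^ 2 ≤ ∑ i, ∑ j, (c * (e i + e j)) ^ 2 :=
        Finset.sum_le_sum fun i _ => Finset.sum_le_sum fun j _ =>
          sq_le_sq' (neg_le_of_abs_le (h i j)) (le_of_abs_le (h i j))
    _ = _ := by
        simp only [mul_pow, add_sq, ← Finset.mul_sum, Finset.sum_add_distrib, Finset.sum_const,
          Finset.card_univ, nsmul_eq_mul, ← Finset.sum_mul, sq (∑ i, e i)]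
        ring

theorem ntk_cts_sensitivity_general {d n : ℕ} (σ B β : ℝ)
    (x x' : Fin (n + 1) → Fin d → ℝ)
    (hx : ∀ i, l2 (x i) ≤ B) (hx' : ∀ i, l2 (x' i) ≤ B)
    (heq : ∀ i, i ≠ Fin.last n → x' i = x i)
    (hclose : l2 (x (Fin.last n) - x' (Fin.last n)) ≤ β) :
    frobNorm (ntkCts σ x - ntkCts σ x') ≤
      σ ^ 2 * B ^ 3 * β * Real.sqrt (8 * (n + 1) + 8) := by
  set e : Fin (n + 1) → ℝ := fun i => l2 (x i - x' i)
  have hB : 0 ≤ B := (l2_nonneg _).trans (hx 0)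
  have hβ : 0 ≤ β := (l2_nonneg _).trans hclose
  have he : ∀ i, i ≠ Fin.last n → e i = 0 := fun i hi => by simp [e, heq i hi, l2_zero]
  have hentry : ∀ i j, |(ntkCts σ x - ntkCts σ x') i j| ≤ 2 * σ ^ 2 * B ^ 3 * (e i + e j) := by
    intro i j
    rw [Matrix.sub_apply, ntkCts_apply, ntkCts_apply, ← mul_sub, abs_mul, abs_sq]
    exact (mul_le_mul_of_nonneg_left (abs_sq_ip_sub_sq_ip_le (hx i) (hx' i) (hx j) (hx' j))
      (sq_nonneg σ)).trans_eq (by ring)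
  have hsum : ∑ i, e i = e (Fin.last n) := Fintype.sum_eq_single _ he
  have hsum_sq : ∑ i, e i ^ 2 = e (Fin.last n) ^ 2 :=
    Fintype.sum_eq_single _ fun i hi => by rw [he i hi, sq, mul_zero]
  rw [frobNorm, Real.sqrt_le_left (by positivity)]
  calc ∑ i, ∑ j, (ntkCts σ x - ntkCts σ x') i j ^ 2
      ≤ (2 * σ ^ 2 * B ^ 3) ^ 2 * (2 * (n + 1) * ∑ i, e i ^ 2 + 2 * (∑ i, e i) ^ 2) := by
        simpa using sum_sum_sq_le_of_abs_le hentry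
    _ ≤ (2 * σ ^ 2 * B ^ 3) ^ 2 * (2 * (n + 1) * β ^ 2 + 2 * β ^ 2) := by
        rw [hsum, hsum_sq]
        gcongr
        exacts [l2_nonneg _, l2_nonneg _]
    _ = (σ ^ 2 * B ^ 3 * β * Real.sqrt (8 * (n + 1) + 8)) ^ 2 := by
        rw [mul_pow _ (Real.sqrt _), Real.sq_sqrt (by positivity)]
        ring

/-- sensitivity of the continuous quadratic NTK under a β-close
neighboring dataset (here with `n + 1` data points, differing only in the last one). -/
theorem ntk_cts_sensitivity {d n : ℕ} (σ B β : ℝ) (hσ : 0 < σ) (hB : 0 < B) (hβ : 0 ≤ β)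
    (x x' : Fin (n + 1) → Fin d → ℝ)
    (hx : ∀ i, l2 (x i) ≤ B) (hx' : ∀ i, l2 (x' i) ≤ B)
    (heq : ∀ i, i ≠ Fin.last n → x' i = x i)
    (hclose : l2 (x (Fin.last n) - x' (Fin.last n)) ≤ β) :
    frobNorm (ntkCts σ x - ntkCts σ x') ≤
      σ ^ 2 * B ^ 3 * β * Real.sqrt (8 * (n + 1) + 8) :=
  ntk_cts_sensitivity_general σ B β x x' hx hx' heq hclose
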